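/- arXiv:1804.00068 — 3 statements merged into one kernel-verified Lean document; each statement's English description precedes it below -/
import Mathlib

section
/- Given finite signed sets S_0, S_1, …, S_{k+1} where S_0 and S_{k+1} contain only positive elements, and sign-reversing involutions φ_i on the signed difference S_i − S_{i+1} for each 0 ≤ i ≤ k, there exists a bijection between S_0 and S_{k+1}. -/
/-- The sign function on the signed difference `S i − S (i+1)`: elements of `S i`
keep their sign, elements of `S (i+1)` have their sign flipped. -/
def diffSign {k : ℕ} (S : Fin (k + 2) → Type*) (ε : ∀ i, S i → Bool) (i : Fin (k + 1)) :
    S i.castSucc ⊕ S i.succ → Bool :=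
  Sum.elim (ε i.castSucc) (fun y => !(ε i.succ y))

/-!
The signed cardinality `#S⁺ - #S⁻` vanishes on a signed set carrying a sign-reversing
involution, and is additive under signed differences. Hence all the `S i` have the same
signed cardinality; for `S 0` and `S (k+1)`, which have no negative elements, it is the
ordinary cardinality, and finite types of equal cardinality are in bijection.
-/

section SignedCard

variable {α β : Type*} [Fintype α] [Fintype β]

def signedCard (ε : α → Bool) : ℤ := ∑ x, if ε x then 1 else -1

theorem signedCard_sumElim (f : α → Bool) (g : β → Bool) :
    signedCard (Sum.elim f g) = signedCard f + signedCard g :=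
  Fintype.sum_sum_type _

theorem signedCard_not (ε : α → Bool) : signedCard (fun x => !ε x) = -signedCard ε := by
  simp only [signedCard, ← Finset.sum_neg_distrib]
  exact Finset.sum_congr rfl fun x _ => by rcases Bool.eq_false_or_eq_true (ε x) with h | h <;> simp [h]

theorem signedCard_of_forall_true {ε : α → Bool} (h : ∀ x, ε x = true) :
    signedCard ε = Fintype.card α := by
  simp [signedCard, h]

theorem signedCard_eq_zero_of_involutive {ε : α → Bool} {φ : α → α}
    (hφ : Function.Involutive φ) (hsign : ∀ x, ε (φ x) = !ε x) : signedCard ε = 0 := by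
  have h : signedCard ε = -signedCard ε :=
    calc signedCard ε = signedCard (ε ∘ hφ.toPerm φ) := (Equiv.sum_comp _ _).symm
      _ = signedCard (fun x => !ε x) := by simp only [Function.comp_def, hφ.coe_toPerm, hsign]
      _ = -signedCard ε := signedCard_not ε
  omega

end SignedCard

/-- **Involution Principle (Garsia–Milne).** Given finite signed sets
`S 0, S 1, …, S (k+1)` (sign `true` = positive) where `S 0` and `S (k+1)` contain only
positive elements, and for each `0 ≤ i ≤ k` a sign-reversing involution `φ i` on the
signed difference `S i − S (i+1)`, there is a bijection between `S 0` and `S (k+1)`. -/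
theorem involution_principle {k : ℕ} (S : Fin (k + 2) → Type*) [∀ i, Fintype (S i)]
    (ε : ∀ i, S i → Bool)
    (h0 : ∀ x : S 0, ε 0 x = true)
    (hlast : ∀ x : S (Fin.last (k + 1)), ε (Fin.last (k + 1)) x = true)
    (φ : ∀ i : Fin (k + 1), S i.castSucc ⊕ S i.succ → S i.castSucc ⊕ S i.succ)
    (hinv : ∀ i x, φ i (φ i x) = x)
    (hsign : ∀ i x, diffSign S ε i (φ i x) = !(diffSign S ε i x)) :
    Nonempty (S 0 ≃ S (Fin.last (k + 1))) := by
  have step (i : Fin (k + 1)) : signedCard (ε i.succ) = signedCard (ε i.castSucc) := by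
    have h := signedCard_eq_zero_of_involutive (hinv i) (hsign i)
    rw [diffSign, signedCard_sumElim, signedCard_not] at h
    omega
  have const (j : Fin (k + 2)) : signedCard (ε j) = signedCard (ε 0) := by
    induction j using Fin.induction with
    | zero => rfl
    | succ i ih => rw [step, ih]
  have hcard := const (Fin.last (k + 1))
  rw [signedCard_of_forall_true h0, signedCard_of_forall_true hlast] at hcard
  exact Fintype.card_eq.mp (by exact_mod_cast hcard.symm)
end

section
/- Let A be the Laplacian matrix of a weighted complete directed graph on nodes {0,…,n}, i.e., A_{ij} = −a_{ij} for i ≠ j and A_{ii} = Σ_{k≠i} a_{ik}. Then det(A_{0,0}), the determinant of A with row and column 0 removed, equals the sum over all spanning trees T rooted at node 0 (every non-root node has exactly one out-edge and a directed path to 0) of the product of the weights a_{ij} of the edges of T. -/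
open scoped Classical

/-- `f` encodes a directed rooted forest with root set `U`. -/
def IsForest {V : Type*} (U : Set V) (f : V → V) : Prop :=
  (∀ i ∈ U, f i = i) ∧ ∀ i, ∃ k, f^[k] i ∈ U

/-- The Laplacian of the weighted complete directed graph with edge weights `a`:
`A i j = -a i j` off the diagonal and `A i i = ∑_{k ≠ i} a i k`. -/
noncomputable def laplacian {m : ℕ} {R : Type*} [CommRing R]
    (a : Fin m → Fin m → R) : Matrix (Fin m) (Fin m) R :=
  fun i j => if i = j then ∑ k ∈ Finset.univ.filter (fun k => k ≠ i), a i k else - a i j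

/-!
Row `i` of the Laplacian is `∑ₖ a i k • (eᵢ - eₖ)`, so multilinearity of the determinant in the
rows expands `det A₀₀` as a sum, over all choices `r` of one out-neighbour per non-root node,
of `∏ a i (r i)` times the reduced Laplacian `1 - P_r` of the functional graph of `r`.
If `r` is a forest, `P_r` strictly lowers the depth, so `1 - P_r` is unitriangular and has
determinant `1`. Otherwise the indicator of the nodes that never reach the root lies in the
kernel of `1 - P_r`, so its determinant vanishes.
-/

open Finset Matrix

section MatrixTree

variable {R : Type*} [CommRing R]

theorem Matrix.det_one_sub_eq_one_of_forall_ne_zero_lt {ι : Type*} [Fintype ι] [DecidableEq ι]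
    (P : Matrix ι ι R) (d : ι → ℕ) (hP : ∀ i j, P i j ≠ 0 → d j < d i) : (1 - P).det = 1 := by
  have hblock : (1 - P).BlockTriangular (OrderDual.toDual ∘ d) := by
    intro i j hij
    have hne : i ≠ j := by rintro rfl; exact lt_irrefl _ hij
    have hP0 : P i j = 0 := by_contra fun h => (hP i j h).not_gt hij
    simp [one_apply_ne hne, hP0]
  have hdiag : ∀ k, (1 - P).toSquareBlock (OrderDual.toDual ∘ d) k = 1 := by
    intro k
    ext ⟨i, hi⟩ ⟨j, hj⟩
    have hP0 : P i j = 0 := by_contra fun h => (hP i j h).ne (hj.trans hi.symm)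
    simp [toSquareBlock_def, one_apply, hP0]
  simp [hblock.det, hdiag]

def functionalGraph {ι : Type*} [DecidableEq ι] (f : ι → ι) : Matrix ι ι R :=
  of fun i => Pi.single (f i) 1

namespace IsForest

variable {V : Type*} {U : Set V} {f : V → V}

noncomputable def depth (hf : IsForest U f) (i : V) : ℕ := Nat.find (hf.2 i)

theorem iterate_depth_mem (hf : IsForest U f) (i : V) : f^[hf.depth i] i ∈ U :=
  Nat.find_spec (hf.2 i)

theorem depth_apply_lt (hf : IsForest U f) {i : V} (hi : i ∉ U) :
    hf.depth (f i) < hf.depth i := by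
  obtain ⟨d, hd⟩ : ∃ d, hf.depth i = d + 1 :=
    Nat.exists_eq_succ_of_ne_zero fun h => hi (by simpa [h] using hf.iterate_depth_mem i)
  have hreach : f^[d] (f i) ∈ U := by
    rw [← Function.iterate_succ_apply, Nat.succ_eq_add_one, ← hd]
    exact hf.iterate_depth_mem i
  exact hd ▸ Nat.lt_succ_of_le (Nat.find_min' _ hreach)

end IsForest

theorem not_isForest_iff {V : Type*} {U : Set V} {f : V → V} (hU : ∀ i ∈ U, f i = i) :
    ¬IsForest U f ↔ ∃ i, ∀ k, f^[k] i ∉ U := by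
  simp [IsForest, and_iff_right hU]

theorem forall_iterate_apply_notMem_iff {V : Type*} {U : Set V} {f : V → V} {i : V}
    (hi : i ∉ U) : (∀ k, f^[k] (f i) ∉ U) ↔ ∀ k, f^[k] i ∉ U := by
  refine ⟨fun h k => ?_, fun h k => Function.iterate_succ_apply f k i ▸ h (k + 1)⟩
  cases k with
  | zero => exact hi
  | succ k => exact Function.iterate_succ_apply f k i ▸ h k

variable {n : ℕ}

theorem functionalGraph_submatrix_succ_mulVec (f : Fin (n + 1) → Fin (n + 1))
    {w : Fin (n + 1) → R} (hw : w 0 = 0) :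
    (functionalGraph f).submatrix Fin.succ Fin.succ *ᵥ (w ∘ Fin.succ) = fun i => w (f i.succ) := by
  ext i
  rw [← Fintype.sum_ite_eq' (f i.succ) w, Fin.sum_univ_succ]
  simp [functionalGraph, mulVec, dotProduct, Pi.single_apply, hw]

theorem det_one_sub_functionalGraph_of_isForest {f : Fin (n + 1) → Fin (n + 1)}
    (hf : IsForest {0} f) :
    (1 - (functionalGraph f).submatrix Fin.succ Fin.succ : Matrix (Fin n) (Fin n) R).det = 1 := by
  refine det_one_sub_eq_one_of_forall_ne_zero_lt _ (fun i => hf.depth i.succ) fun i j h => ?_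
  have hij : f i.succ = j.succ := by
    by_contra hne
    simp [functionalGraph, Ne.symm hne] at h
  exact hij ▸ hf.depth_apply_lt (Fin.succ_ne_zero i)

theorem det_one_sub_functionalGraph_of_not_isForest {f : Fin (n + 1) → Fin (n + 1)}
    (h0 : f 0 = 0) (hf : ¬IsForest {0} f) :
    (1 - (functionalGraph f).submatrix Fin.succ Fin.succ : Matrix (Fin n) (Fin n) R).det = 0 := by
  obtain ⟨i, hi⟩ := (not_isForest_iff (by simpa using h0)).1 hf
  obtain ⟨i, rfl⟩ := Fin.exists_succ_eq.2 (by simpa using hi 0)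
  let w : Fin (n + 1) → R := fun x => if ∀ k, f^[k] x ∉ ({0} : Set _) then 1 else 0
  refine det_eq_zero_of_mulVec_eq_zero_of_mem_nonZeroDivisors (v := w ∘ Fin.succ) (i := i)
    ?_ (by simp only [w, Function.comp_apply, if_pos hi]; exact one_mem _)
  rw [sub_mulVec, one_mulVec, functionalGraph_submatrix_succ_mulVec f (if_neg fun h => h 0 rfl),
    sub_eq_zero]
  ext j
  simp only [w, Function.comp_apply,
    forall_iterate_apply_notMem_iff (U := {0}) (f := f) (Fin.succ_ne_zero j)]

theorem det_one_sub_functionalGraph {f : Fin (n + 1) → Fin (n + 1)} (h0 : f 0 = 0) :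
    (1 - (functionalGraph f).submatrix Fin.succ Fin.succ : Matrix (Fin n) (Fin n) R).det =
      if IsForest {0} f then 1 else 0 := by
  split_ifs with hf
  · exact det_one_sub_functionalGraph_of_isForest hf
  · exact det_one_sub_functionalGraph_of_not_isForest h0 hf

theorem laplacian_row_eq_sum {m : ℕ} (a : Fin m → Fin m → R) (i : Fin m) :
    laplacian a i = ∑ k, a i k • (Pi.single i 1 - Pi.single k 1) := by
  ext j
  by_cases hij : i = j
  · subst hij
    simp only [laplacian, if_true, Finset.sum_apply, Pi.smul_apply, Pi.sub_apply, Pi.single_apply,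
      smul_eq_mul, sum_filter]
    refine Fintype.sum_congr _ _ fun k => ?_
    by_cases hk : k = i
    · simp [hk]
    · simp [hk, Ne.symm hk]
  · simp [laplacian, hij, Finset.sum_apply, Pi.single_apply, Ne.symm hij]

theorem det_laplacian_submatrix_succ_eq_sum (a : Fin (n + 1) → Fin (n + 1) → R) :
    ((laplacian a).submatrix Fin.succ Fin.succ).det = ∑ r : Fin n → Fin (n + 1),
      (∏ i, a i.succ (r i)) *
        (1 - (functionalGraph (Fin.cons 0 r : Fin (n + 1) → Fin (n + 1))).submatrix
          Fin.succ Fin.succ : Matrix (Fin n) (Fin n) R).det := by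
  have hrows : (laplacian a).submatrix Fin.succ Fin.succ =
      fun i => ∑ k, a i.succ k • ((Pi.single i.succ 1 - Pi.single k 1) ∘ Fin.succ) := by
    ext i j
    simp [laplacian_row_eq_sum a i.succ, Finset.sum_apply]
  rw [hrows]
  change detRowAlternating.toMultilinearMap _ = _
  rw [MultilinearMap.map_sum]
  refine Fintype.sum_congr _ _ fun r => ?_
  have hM : (fun i => (Pi.single i.succ 1 - Pi.single (r i) 1) ∘ Fin.succ) =
      (1 - (functionalGraph (Fin.cons 0 r : Fin (n + 1) → Fin (n + 1))).submatrix
        Fin.succ Fin.succ : Matrix (Fin n) (Fin n) R) := by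
    ext i j
    simp [functionalGraph, one_apply, Pi.single_apply, eq_comm]
  rw [MultilinearMap.map_smul_univ, smul_eq_mul, hM]
  rfl

theorem sum_filter_isForest {M : Type*} [AddCommMonoid M] (g : (Fin (n + 1) → Fin (n + 1)) → M) :
    ∑ f ∈ univ.filter (IsForest {0}), g f =
      ∑ r : Fin n → Fin (n + 1), if IsForest {0} (Fin.cons 0 r : Fin (n + 1) → Fin (n + 1))
        then g (Fin.cons 0 r) else 0 := by
  rw [sum_filter, ← (Fin.consEquiv fun _ => Fin (n + 1)).sum_comp, Fintype.sum_prod_type,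
    Fintype.sum_eq_single 0]
  · rfl
  · intro x hx
    refine sum_eq_zero fun r _ => if_neg fun hf => hx ?_
    simpa using hf.1 0 rfl

theorem Fin.prod_filter_ne_zero {M : Type*} [CommMonoid M] (g : Fin (n + 1) → M) :
    ∏ i ∈ univ.filter (· ≠ 0), g i = ∏ i : Fin n, g i.succ := by
  simp [prod_filter, Fin.prod_univ_succ]

end MatrixTree

/-- **Matrix Tree Theorem.** For the Laplacian `A` of the weighted complete directed graph
on nodes `{0, …, n}`, the determinant of `A` with row and column `0` removed equals the sum,
over all spanning trees rooted at `0` (each node `i ≠ 0` has exactly one out-edge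
`i → f i` and a directed path to `0`), of the product of the weights of the tree's edges. -/
theorem matrix_tree_theorem {R : Type*} [CommRing R] {n : ℕ}
    (a : Fin (n + 1) → Fin (n + 1) → R) :
    ((laplacian a).submatrix (Fin.succAbove 0) (Fin.succAbove 0)).det =
      ∑ f ∈ Finset.univ.filter (fun f : Fin (n + 1) → Fin (n + 1) => IsForest {0} f),
        ∏ i ∈ Finset.univ.filter (fun i => i ≠ 0), a i (f i) := by
  rw [Fin.succAbove_zero, det_laplacian_submatrix_succ_eq_sum, sum_filter_isForest]
  refine Fintype.sum_congr _ _ fun r => ?_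
  rw [det_one_sub_functionalGraph (Fin.cons_zero _ _), Fin.prod_filter_ne_zero]
  simp only [Fin.cons_succ, mul_ite, mul_one, mul_zero]
end

section
/- Let A be the Laplacian of a weighted complete directed graph on {0,…,n} and let U ⊆ {0,…,n}. Then det(A_{U,U}) equals the sum over all spanning forests rooted exactly at the nodes of U (each node not in U has exactly one out-edge, no directed cycles) of the product of the edge weights of the forest. -/
/-!
Row `i` of the reduced Laplacian is `∑ₖ a i k • (eᵢ - eₖ)`, where `eₖ = 0` for a root `k ∈ U`.
By multilinearity of the determinant, `det A_{U,U}` expands as the sum, over all maps `p` from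
the non-roots to the nodes, of `∏ᵢ a i (p i) * det (1 - Pₚ)`, where `Pₚ` is the adjacency matrix
of the functional graph of `p` on the non-roots. This determinant is `1` when every orbit of `p`
reaches `U`, since then only the identity survives in the Leibniz expansion, and `0` otherwise,
since then the indicator of the points whose orbit avoids `U` lies in its kernel.
-/

open scoped Classical

open Finset Matrix Function

theorem Matrix.det_of_sum_smul_rows {ι κ R : Type*} [Fintype ι] [DecidableEq ι] [Fintype κ]
    [CommRing R] (c : ι → κ → R) (r : ι → κ → ι → R) :
    (of fun i => ∑ k, c i k • r i k).det =
      ∑ p : ι → κ, (∏ i, c i (p i)) * (of fun i => r i (p i)).det := by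
  change detRowAlternating (fun i => ∑ k, c i k • r i k) = _
  rw [← AlternatingMap.coe_multilinearMap, MultilinearMap.map_sum]
  refine Finset.sum_congr rfl fun p _ => ?_
  rw [MultilinearMap.map_smul_univ, smul_eq_mul]
  rfl

theorem Matrix.det_eq_zero_of_mulVec_eq_zero {n R : Type*} [Fintype n] [DecidableEq n]
    [CommRing R] {M : Matrix n n R} {v : n → R} (hv : M *ᵥ v = 0) (i : n) (hi : IsUnit (v i)) :
    M.det = 0 := by
  have h := congrFun (congrArg (M.adjugate *ᵥ ·) hv) i
  simp only [mulVec_mulVec, adjugate_mul, smul_mulVec, one_mulVec, Pi.smul_apply, smul_eq_mul,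
    mulVec_zero, Pi.zero_apply] at h
  exact hi.mul_left_eq_zero.mp h

theorem forall_iterate_notMem_iff {V : Type*} {s : Set V} {f : V → V} {x : V} (hx : x ∉ s) :
    (∀ k, f^[k] x ∉ s) ↔ ∀ k, f^[k] (f x) ∉ s := by
  refine ⟨fun h k => iterate_succ_apply f k x ▸ h (k + 1), fun h k => ?_⟩
  cases k with
  | zero => exact hx
  | succ k => exact (iterate_succ_apply f k x).symm ▸ h k

section FunctionalGraph

variable {V : Type*} [Fintype V] [DecidableEq V]

variable (R : Type*) [CommRing R] in
def successorMatrix (U : Finset V) (f : V → V) : Matrix {i // i ∉ U} {i // i ∉ U} R :=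
  of fun i j => if f i = j then 1 else 0

variable {R : Type*} [CommRing R] {U : Finset V} {f : V → V}

theorem successorMatrix_mulVec (v : {i // i ∉ U} → R) (i : {i // i ∉ U}) :
    (successorMatrix R U f *ᵥ v) i = if h : f i ∈ U then 0 else v ⟨f i, h⟩ := by
  split_ifs with h
  · refine Finset.sum_eq_zero fun j _ => ?_
    simp [successorMatrix, show f i ≠ j from fun e => j.2 (e ▸ h)]
  · have hf (j : {i // i ∉ U}) : f i = j ↔ ⟨f i, h⟩ = j := by rw [Subtype.ext_iff]
    simp [successorMatrix, mulVec, dotProduct, hf]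

theorem det_one_sub_successorMatrix_eq_one (h : ∀ i, ∃ k, f^[k] i ∈ U) :
    (1 - successorMatrix R U f).det = 1 := by
  have hfix (i : {i // i ∉ U}) : f i ≠ i := fun hi => by
    obtain ⟨k, hk⟩ := h i
    exact i.2 ((show IsFixedPt f i from hi).iterate k ▸ hk)
  rw [← det_transpose, det_apply, Finset.sum_eq_single 1]
  · simp [successorMatrix, hfix]
  · intro σ _ hσ
    obtain ⟨i, hi⟩ : ∃ i, σ i ≠ i := not_forall.mp fun h' => hσ (Equiv.ext h')
    suffices ∃ j, (1 - successorMatrix R U f) j (σ j) = 0 by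
      obtain ⟨j, hj⟩ := this
      rw [Finset.prod_eq_zero (mem_univ j) hj, smul_zero]
    by_contra! hne
    -- Otherwise `f` agrees with `σ` off its fixed points, so the `f`-orbit of `i` runs
    -- around the `σ`-cycle of `i` forever and never reaches `U`.
    have hσf (j) (hj : σ j ≠ j) : f j = σ j := by
      by_contra hf
      exact hne j (by simp [successorMatrix, one_apply_ne hj.symm, hf])
    have horbit (k : ℕ) : σ (σ^[k] i) ≠ σ^[k] i ∧ f^[k] i = (σ^[k] i : V) := by
      induction k with
      | zero => exact ⟨hi, rfl⟩
      | succ k ih =>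
        rw [iterate_succ_apply', iterate_succ_apply']
        exact ⟨fun e => ih.1 (σ.injective e), by rw [ih.2, hσf _ ih.1]⟩
    obtain ⟨k, hk⟩ := h i
    exact (σ^[k] i).2 ((horbit k).2 ▸ hk)
  · simp

theorem det_one_sub_successorMatrix_eq_zero (h : ¬ ∀ i, ∃ k, f^[k] i ∈ U) :
    (1 - successorMatrix R U f).det = 0 := by
  push Not at h
  obtain ⟨x, hx⟩ := h
  let v : {i // i ∉ U} → R := fun j => if ∀ k, f^[k] j ∉ U then 1 else 0
  refine det_eq_zero_of_mulVec_eq_zero (v := v) ?_ ⟨x, by simpa using hx 0⟩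
    (by simp [v, hx])
  ext j
  rw [sub_mulVec, one_mulVec, Pi.sub_apply, successorMatrix_mulVec, Pi.zero_apply, sub_eq_zero]
  split_ifs with hj
  · exact if_neg fun h => h 1 hj
  · exact if_congr (forall_iterate_notMem_iff j.2) rfl rfl

theorem det_one_sub_successorMatrix :
    (1 - successorMatrix R U f).det = if ∀ i, ∃ k, f^[k] i ∈ U then 1 else 0 := by
  split_ifs with h
  · exact det_one_sub_successorMatrix_eq_one h
  · exact det_one_sub_successorMatrix_eq_zero h

theorem sum_extend_subtypeVal {M : Type*} [AddCommMonoid M] (U : Finset V) (G : (V → V) → M) :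
    ∑ p : {i // i ∉ U} → V, G (extend Subtype.val p id) =
      ∑ f ∈ univ.filter fun f : V → V => ∀ i ∈ U, f i = i, G f := by
  have extend_of_mem (p : {i // i ∉ U} → V) {x : V} (hx : x ∈ U) :
      extend Subtype.val p id x = x :=
    extend_apply' _ _ _ fun ⟨i, hi⟩ => i.2 (hi ▸ hx)
  refine Finset.sum_nbij' (fun p => extend Subtype.val p id) (fun f i => f i) ?_ (by simp) ?_ ?_
    (fun _ _ => rfl)
  · simp only [mem_univ, mem_filter, true_and]
    exact fun p _ x hx => extend_of_mem p hx
  · exact fun p _ => funext fun i => Subtype.val_injective.extend_apply _ _ i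
  · simp only [mem_filter, mem_univ, true_and]
    intro f hf
    funext x
    by_cases hx : x ∈ U
    · rw [extend_of_mem _ hx, hf x hx]
    · exact Subtype.val_injective.extend_apply (fun i : {i // i ∉ U} => f i) id ⟨x, hx⟩

end FunctionalGraph

section Laplacian

variable {m : ℕ} {R : Type*} [CommRing R] (a : Fin m → Fin m → R) (U : Finset (Fin m))

theorem laplacian_submatrix_eq :
    (laplacian a).submatrix (fun i : {i // i ∉ U} => (i : Fin m))
        (fun j : {j // j ∉ U} => (j : Fin m)) =
      of fun i : {i // i ∉ U} => ∑ k, a i k • fun j : {j // j ∉ U} =>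
        (1 : Matrix {i // i ∉ U} {i // i ∉ U} R) i j - if k = j then 1 else 0 := by
  ext i j
  by_cases hij : i = j
  · subst hij
    simp [laplacian, Finset.sum_apply, mul_sub, Finset.filter_ne', Finset.sum_erase_eq_sub]
  · simp [laplacian, Finset.sum_apply, hij, Subtype.val_injective.ne hij]

theorem det_laplacian_submatrix :
    ((laplacian a).submatrix (fun i : {i // i ∉ U} => (i : Fin m))
        (fun j : {j // j ∉ U} => (j : Fin m))).det =
      ∑ p : {i // i ∉ U} → Fin m, (∏ i : {i // i ∉ U}, a i (p i)) *
        (1 - successorMatrix R U (extend Subtype.val p id)).det := by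
  rw [laplacian_submatrix_eq, det_of_sum_smul_rows]
  refine Finset.sum_congr rfl fun p _ => ?_
  congr 2
  ext i j
  simp [successorMatrix]

end Laplacian

/-- **All Minors Matrix Tree Theorem, principal case.** For the Laplacian `A` of a weighted
complete directed graph on `{0, …, n}` and a set `U` of nodes, the determinant of `A` with
the rows and columns indexed by `U` deleted equals the sum over all spanning forests rooted
exactly at `U` of the products of their edge weights. -/
theorem all_minors_matrix_tree_principal {R : Type*} [CommRing R] {n : ℕ}
    (a : Fin (n + 1) → Fin (n + 1) → R) (U : Finset (Fin (n + 1))) :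
    ((laplacian a).submatrix (fun i : {i // i ∉ U} => (i : Fin (n + 1)))
        (fun j : {j // j ∉ U} => (j : Fin (n + 1)))).det =
      ∑ f ∈ Finset.univ.filter
          (fun f : Fin (n + 1) → Fin (n + 1) => IsForest {i | i ∈ U} f),
        ∏ i ∈ Finset.univ.filter (fun i => i ∉ U), a i (f i) := by
  let G (f : Fin (n + 1) → Fin (n + 1)) : R :=
    (∏ i : {i // i ∉ U}, a i (f i)) * (1 - successorMatrix R U f).det
  calc _ = ∑ p : {i // i ∉ U} → Fin (n + 1), G (extend Subtype.val p id) := by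
        simp [det_laplacian_submatrix, G]
    _ = _ := sum_extend_subtypeVal U G
    _ = _ := by
      rw [Finset.sum_filter, Finset.sum_filter]
      refine Finset.sum_congr rfl fun f _ => ?_
      simp only [G, det_one_sub_successorMatrix, IsForest, Set.mem_ofPred_eq, ite_and, mul_ite,
        mul_one, mul_zero, Finset.prod_subtype (univ.filter (· ∉ U)) (p := (· ∉ U)) (by simp)]
end
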